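/- Let ε > 0, let N ≥ 1 be an integer, and let x be a strictly ordered particle solution on [0,∞). Then for every p ∈ [1,∞) and every t ≥ 0, ‖ρ^N(·,t)‖_{L^p(ℝ)} ≤ max{ ‖ρ^N(·,0)‖_{L^p(ℝ)}, (2ε)^{−(p−1)/p} }, and ‖ρ^N(·,t)‖_{L^∞(ℝ)} ≤ max{ ‖ρ^N(·,0)‖_{L^∞(ℝ)}, 1/(2ε) }. -/

import Mathlib

open MeasureTheory Real Set
open scoped ENNReal

/-- Scaled Morse potential `W_ε(x) = (1/(2ε)) e^{-|x|/ε}`. -/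
noncomputable def Morse (ε x : ℝ) : ℝ := (1 / (2 * ε)) * Real.exp (-|x| / ε)

/-- Derivative of the scaled Morse potential,
`W_ε'(x) = -(1/(2ε²)) sign(x) e^{-|x|/ε}`. -/
noncomputable def Morse' (ε x : ℝ) : ℝ :=
  -(1 / (2 * ε ^ 2)) * Real.sign x * Real.exp (-|x| / ε)

/-- Right-hand side of the particle ODE system:
`(1/N) ∑_{k=0}^{N-1} (W_ε(x_{k+1}-x_i) - W_ε(x_k-x_i))/(x_{k+1}-x_k)`. -/
noncomputable def particleRHS (ε : ℝ) (N : ℕ) (x : ℕ → ℝ) (i : ℕ) : ℝ :=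
  (1 / (N : ℝ)) * ∑ k ∈ Finset.range N,
    (Morse ε (x (k + 1) - x i) - Morse ε (x k - x i)) / (x (k + 1) - x k)

/-- A strictly ordered particle solution on `[0,∞)`:  a differentiable curve
`x = (x_0,…,x_N)` with `x_0(t) < ⋯ < x_N(t)` for all `t ≥ 0`, solving the particle ODE. -/
def IsParticleSol (ε : ℝ) (N : ℕ) (x : ℝ → ℕ → ℝ) : Prop :=
  (∀ t : ℝ, 0 ≤ t → ∀ i < N, x t i < x t (i + 1)) ∧
  (∀ i ≤ N, ∀ t : ℝ, 0 ≤ t →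
    HasDerivWithinAt (fun s => x s i) (particleRHS ε N (x t) i) (Set.Ici 0) t)

/-- The discrete (piecewise constant) density
`ρ^N(y,t) = ∑_{k=0}^{N-1} R_k(t) 1_{[x_k(t), x_{k+1}(t))}(y)` with `R_k = 1/(N d_k)`. -/
noncomputable def discDens (N : ℕ) (x : ℝ → ℕ → ℝ) (y t : ℝ) : ℝ :=
  ∑ k ∈ Finset.range N,
    Set.indicator (Set.Ico (x t k) (x t (k + 1)))
      (fun _ => 1 / ((N : ℝ) * (x t (k + 1) - x t k))) y

/-- Convolution in the space variable: `(W ∗ ρ)(x) = ∫ W(x-y) ρ(y) dy`. -/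
noncomputable def conv (W ρ : ℝ → ℝ) (x : ℝ) : ℝ := ∫ y, W (x - y) * ρ y

/-!
In terms of the gaps `d_k = x_{k+1} - x_k`, `‖ρ^N‖_p^p = N^{-p} ∑_k d_k^{1-p}`, whose time
derivative is `(1 - p) ∑_k d_k^{-p} (ẋ_{k+1} - ẋ_k)`. The velocity differences are
combinations of the mixed second differences `B_{jk}` of `W`, which are symmetric because `W` is
even and nonpositive off the diagonal because `W` is convex on `(-∞, 0]`. Pairing `(j, k)` with
`(k, j)` splits the sum into a Chebyshev term (`d^{-p}` and `1/d` are similarly ordered) and the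
row sums of `B`, which telescope to something nonnegative because `W` increases on `(-∞, 0]`.
So every `L^p` norm is nonincreasing along the flow. Since `‖ρ^N‖_∞ = max_k 1/(N d_k)` is
dominated by these power sums as `p → ∞`, the smallest gap never shrinks either.
-/

open Finset

theorem ConvexOn.add_add_le_add_add {s : Set ℝ} {f : ℝ → ℝ} (hf : ConvexOn ℝ s f) {p a b : ℝ}
    (hp : p ∈ s) (hpab : p + a + b ∈ s) (ha : 0 ≤ a) (hb : 0 ≤ b) :
    f (p + a) + f (p + b) ≤ f p + f (p + a + b) := by
  rcases (add_nonneg ha hb).eq_or_lt with hab | hab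
  · obtain ⟨rfl, rfl⟩ : a = 0 ∧ b = 0 := ⟨by linarith, by linarith⟩
    simp
  have hμ : 0 ≤ a / (a + b) := by positivity
  have hν : 0 ≤ b / (a + b) := by positivity
  have hμν : a / (a + b) + b / (a + b) = 1 := by field_simp
  have h₁ := hf.2 hp hpab hν hμ (by rwa [add_comm])
  have h₂ := hf.2 hp hpab hμ hν hμν
  simp only [smul_eq_mul] at h₁ h₂
  rw [show b / (a + b) * p + a / (a + b) * (p + a + b) = p + a by field_simp; ring] at h₁
  rw [show a / (a + b) * p + b / (a + b) * (p + a + b) = p + b by field_simp; ring] at h₂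
  linear_combination h₁ + h₂ + (f p + f (p + a + b)) * hμν

theorem Finset.sum_sum_mul_mul_sub_nonneg {ι : Type*} {s : Finset ι} {B : ι → ι → ℝ}
    {u w : ι → ℝ} (hB : ∀ i j, B i j = B j i)
    (hB_nonpos : ∀ i ∈ s, ∀ j ∈ s, i ≠ j → B i j ≤ 0) (huw : MonovaryOn u w s) :
    0 ≤ ∑ i ∈ s, ∑ j ∈ s, B i j * w i * (u j - u i) := by
  have hswap : ∑ i ∈ s, ∑ j ∈ s, B i j * w i * (u j - u i)
      = ∑ i ∈ s, ∑ j ∈ s, B i j * w j * (u i - u j) := by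
    rw [sum_comm]
    simp only [hB]
  have hsymm : 2 * ∑ i ∈ s, ∑ j ∈ s, B i j * w i * (u j - u i)
      = ∑ i ∈ s, ∑ j ∈ s, -B i j * ((u j - u i) * (w j - w i)) := by
    rw [two_mul]
    nth_rewrite 2 [hswap]
    simp only [← sum_add_distrib]
    exact sum_congr rfl fun i _ => sum_congr rfl fun j _ => by ring
  have hterm : ∀ i ∈ s, ∀ j ∈ s, 0 ≤ -B i j * ((u j - u i) * (w j - w i)) := by
    intro i hi j hj
    rcases eq_or_ne i j with rfl | hij
    · simp
    · exact mul_nonneg (neg_nonneg.2 (hB_nonpos i hi j hj hij)) (huw.sub_mul_sub_nonneg hi hj)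
  have := sum_nonneg fun i hi => sum_nonneg fun j hj => hterm i hi j hj
  linarith

theorem Finset.exists_le_of_forall_sum_pow_le {ι : Type*} {s : Finset ι} {a b : ι → ℝ}
    (ha : ∀ i ∈ s, 0 ≤ a i) (hb : ∀ i ∈ s, 0 ≤ b i)
    (h : ∀ n : ℕ, ∑ i ∈ s, a i ^ n ≤ ∑ i ∈ s, b i ^ n) {i : ι} (hi : i ∈ s) :
    ∃ j ∈ s, a i ≤ b j := by
  obtain ⟨j, hj, hmax⟩ := s.exists_max_image b ⟨i, hi⟩
  refine ⟨j, hj, not_lt.1 fun hlt => ?_⟩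
  have hai : 0 < a i := (hb j hj).trans_lt hlt
  have hcard : (0 : ℝ) < #s := by exact_mod_cast card_pos.2 ⟨i, hi⟩
  obtain ⟨n, hn⟩ := exists_pow_lt_of_lt_one (inv_pos.2 hcard) ((div_lt_one hai).2 hlt)
  rw [div_pow, div_lt_iff₀ (pow_pos hai n)] at hn
  have hbound : a i ^ n ≤ #s * b j ^ n := calc
    a i ^ n ≤ ∑ k ∈ s, a k ^ n := single_le_sum (fun k hk => pow_nonneg (ha k hk) n) hi
    _ ≤ ∑ k ∈ s, b k ^ n := h n
    _ ≤ ∑ _k ∈ s, b j ^ n := sum_le_sum fun k hk => pow_le_pow_left₀ (hb k hk) (hmax k hk) n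
    _ = #s * b j ^ n := by rw [sum_const, nsmul_eq_mul]
  have := mul_lt_mul_of_pos_left hn hcard
  rw [← mul_assoc, mul_inv_cancel₀ hcard.ne', one_mul] at this
  linarith

theorem Finset.sum_indicator_apply_of_mem {ι α β : Type*} [AddCommMonoid β] {s : Finset ι}
    {t : ι → Set α} (ht : (s : Set ι).PairwiseDisjoint t) {f : ι → α → β} {i : ι} (hi : i ∈ s)
    {y : α} (hy : y ∈ t i) : ∑ j ∈ s, (t j).indicator (f j) y = f i y := by
  rw [sum_eq_single_of_mem i hi fun j hj hji =>
    Set.indicator_of_notMem (Set.disjoint_right.1 (ht hj hi hji) hy) _, Set.indicator_of_mem hy]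

theorem Finset.apply_sum_indicator_const {ι α β γ : Type*} [AddCommMonoid β] [AddCommMonoid γ]
    {s : Finset ι} {t : ι → Set α} (ht : (s : Set ι).PairwiseDisjoint t) (c : ι → β)
    {F : β → γ} (hF : F 0 = 0) (y : α) :
    F (∑ i ∈ s, (t i).indicator (fun _ => c i) y) =
      ∑ i ∈ s, (t i).indicator (fun _ => F (c i)) y := by
  by_cases h : ∃ i ∈ s, y ∈ t i
  · obtain ⟨i, hi, hy⟩ := h
    rw [sum_indicator_apply_of_mem ht hi hy, sum_indicator_apply_of_mem ht hi hy]
  · push Not at h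
    rw [sum_eq_zero fun i hi => Set.indicator_of_notMem (h i hi) _,
      sum_eq_zero fun i hi => Set.indicator_of_notMem (h i hi) _, hF]

theorem pairwiseDisjoint_Ico_of_lt_succ {N : ℕ} {x : ℕ → ℝ} (hx : ∀ i < N, x i < x (i + 1)) :
    (Finset.range N : Set ℕ).PairwiseDisjoint fun k => Set.Ico (x k) (x (k + 1)) := by
  have hmono := (strictMonoOn_Iic_of_lt_succ hx).monotoneOn
  have hlt : ∀ i j, i < j → j < N →
      Disjoint (Set.Ico (x i) (x (i + 1))) (Set.Ico (x j) (x (j + 1))) :=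
    fun i j hij hj => Set.disjoint_left.2 fun y hyi hyj =>
      (hyi.2.trans_le (hmono (Set.mem_Iic.2 (by omega)) (Set.mem_Iic.2 hj.le) hij)).not_ge hyj.1
  intro i hi j hj hij
  simp only [coe_range, Set.mem_Iio] at hi hj
  rcases hij.lt_or_gt with h | h
  · exact hlt i j h hj
  · exact (hlt j i h hi).symm

section InteractionVelocity

noncomputable def interactionVelocity (W : ℝ → ℝ) (N : ℕ) (x : ℕ → ℝ) (i : ℕ) : ℝ :=
  (1 / (N : ℝ)) * ∑ k ∈ range N, (W (x (k + 1) - x i) - W (x k - x i)) / (x (k + 1) - x k)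

def mixedDiff (W : ℝ → ℝ) (x : ℕ → ℝ) (j k : ℕ) : ℝ :=
  (W (x (j + 1) - x (k + 1)) - W (x j - x (k + 1))) - (W (x (j + 1) - x k) - W (x j - x k))

variable {W : ℝ → ℝ} {N : ℕ} {x : ℕ → ℝ}

theorem interactionVelocity_succ_sub (k : ℕ) :
    interactionVelocity W N x (k + 1) - interactionVelocity W N x k =
      (1 / (N : ℝ)) * ∑ j ∈ range N, mixedDiff W x j k / (x (j + 1) - x j) := by
  simp only [interactionVelocity, mixedDiff, ← mul_sub, ← sum_sub_distrib, sub_div]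

theorem mixedDiff_comm (hW : Function.Even W) (j k : ℕ) :
    mixedDiff W x j k = mixedDiff W x k j := by
  have h : ∀ a b, W (x a - x b) = W (x b - x a) := fun a b => by rw [← hW, neg_sub]
  simp only [mixedDiff]
  rw [h (j + 1) (k + 1), h j (k + 1), h (j + 1) k, h j k]
  ring

theorem mixedDiff_nonpos (hW : Function.Even W) (hconv : ConvexOn ℝ (Set.Iic 0) W)
    (hx : ∀ i < N, x i < x (i + 1)) {j k : ℕ} (hj : j < N) (hk : k < N) (hjk : j ≠ k) :
    mixedDiff W x j k ≤ 0 := by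
  wlog hlt : j < k generalizing j k
  · rw [mixedDiff_comm hW]
    exact this hk hj hjk.symm (hjk.lt_or_gt.resolve_left hlt)
  have hle : x (j + 1) ≤ x k :=
    (strictMonoOn_Iic_of_lt_succ hx).monotoneOn (Set.mem_Iic.2 (by omega)) (Set.mem_Iic.2 hk.le)
      hlt
  have hj' := hx j hj
  have hk' := hx k hk
  have key := hconv.add_add_le_add_add (p := x j - x (k + 1)) (a := x (j + 1) - x j)
    (b := x (k + 1) - x k) (Set.mem_Iic.2 (by linarith)) (Set.mem_Iic.2 (by linarith))
    (by linarith) (by linarith)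
  rw [show x j - x (k + 1) + (x (j + 1) - x j) + (x (k + 1) - x k) = x (j + 1) - x k by ring,
    show x j - x (k + 1) + (x (j + 1) - x j) = x (j + 1) - x (k + 1) by ring,
    show x j - x (k + 1) + (x (k + 1) - x k) = x j - x k by ring] at key
  simp only [mixedDiff]
  linarith

theorem sum_mixedDiff_nonneg (hW : Function.Even W) (hmono : MonotoneOn W (Set.Iic 0))
    (hx : ∀ i < N, x i < x (i + 1)) {j : ℕ} (hj : j < N) :
    0 ≤ ∑ k ∈ range N, mixedDiff W x j k := by
  have hxmono := (strictMonoOn_Iic_of_lt_succ hx).monotoneOn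
  have h0 : x 0 ≤ x j :=
    hxmono (Set.mem_Iic.2 (Nat.zero_le N)) (Set.mem_Iic.2 hj.le) (Nat.zero_le j)
  have hN : x (j + 1) ≤ x N := hxmono (Set.mem_Iic.2 hj) (Set.mem_Iic.2 le_rfl) hj
  have hj' := hx j hj
  have hleft : W (x j - x N) ≤ W (x (j + 1) - x N) :=
    hmono (Set.mem_Iic.2 (by linarith)) (Set.mem_Iic.2 (by linarith)) (by linarith)
  have hright : W (x (j + 1) - x 0) ≤ W (x j - x 0) := by
    rw [← hW (x (j + 1) - x 0), ← hW (x j - x 0)]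
    exact hmono (Set.mem_Iic.2 (by linarith)) (Set.mem_Iic.2 (by linarith)) (by linarith)
  rw [show ∑ k ∈ range N, mixedDiff W x j k =
      (W (x (j + 1) - x N) - W (x j - x N)) - (W (x (j + 1) - x 0) - W (x j - x 0)) from
    sum_range_sub (fun k => W (x (j + 1) - x k) - W (x j - x k)) N]
  linarith

theorem sum_mul_interactionVelocity_sub_nonneg (hW : Function.Even W)
    (hmono : MonotoneOn W (Set.Iic 0)) (hconv : ConvexOn ℝ (Set.Iic 0) W)
    (hx : ∀ i < N, x i < x (i + 1)) {g : ℕ → ℝ} (hg : ∀ k < N, 0 ≤ g k)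
    (hgx : MonovaryOn g (fun k => 1 / (x (k + 1) - x k)) (Finset.range N : Set ℕ)) :
    0 ≤ ∑ k ∈ range N,
      g k * (interactionVelocity W N x (k + 1) - interactionVelocity W N x k) := by
  set w : ℕ → ℝ := fun k => 1 / (x (k + 1) - x k)
  have hsplit : ∑ k ∈ range N,
        g k * (interactionVelocity W N x (k + 1) - interactionVelocity W N x k)
      = (1 / (N : ℝ)) * (∑ j ∈ range N, ∑ k ∈ range N, mixedDiff W x j k * w j * (g k - g j)
          + ∑ j ∈ range N, w j * g j * ∑ k ∈ range N, mixedDiff W x j k) := by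
    simp only [interactionVelocity_succ_sub, mul_sum, ← sum_add_distrib]
    rw [sum_comm]
    refine sum_congr rfl fun j _ => sum_congr rfl fun k _ => ?_
    simp only [w]
    ring
  rw [hsplit]
  refine mul_nonneg (by positivity) (add_nonneg ?_ (sum_nonneg fun j hj => ?_))
  · exact sum_sum_mul_mul_sub_nonneg (mixedDiff_comm hW)
      (fun j hj k hk => mixedDiff_nonpos hW hconv hx (mem_range.1 hj) (mem_range.1 hk)) hgx
  · have hjN := mem_range.1 hj
    exact mul_nonneg (mul_nonneg (one_div_nonneg.2 (sub_nonneg.2 (hx j hjN).le)) (hg j hjN))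
      (sum_mixedDiff_nonneg hW hmono hx hjN)

end InteractionVelocity

theorem particleRHS_eq_interactionVelocity (ε : ℝ) (N : ℕ) :
    particleRHS ε N = interactionVelocity (Morse ε) N := rfl

theorem morse_even (ε : ℝ) : Function.Even (Morse ε) := fun z => by
  simp only [Morse, abs_neg]

theorem morse_of_nonpos {ε z : ℝ} (hz : z ≤ 0) :
    Morse ε z = 1 / (2 * ε) * Real.exp (z / ε) := by
  rw [Morse, abs_of_nonpos hz, neg_neg]

theorem monotoneOn_morse {ε : ℝ} (hε : 0 < ε) : MonotoneOn (Morse ε) (Set.Iic 0) := by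
  intro a ha b hb hab
  rw [morse_of_nonpos ha, morse_of_nonpos hb]
  gcongr

theorem convexOn_morse {ε : ℝ} (hε : 0 < ε) : ConvexOn ℝ (Set.Iic 0) (Morse ε) := by
  refine ⟨convex_Iic 0, fun a ha b hb μ ν hμ hν hμν => ?_⟩
  have hab : μ • a + ν • b ∈ Set.Iic (0 : ℝ) := convex_Iic 0 ha hb hμ hν hμν
  rw [morse_of_nonpos ha, morse_of_nonpos hb, morse_of_nonpos hab]
  have hexp := convexOn_exp.2 (Set.mem_univ (a / ε)) (Set.mem_univ (b / ε)) hμ hν hμν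
  simp only [smul_eq_mul] at hexp ⊢
  rw [show (μ * a + ν * b) / ε = μ * (a / ε) + ν * (b / ε) by ring]
  have hc : 0 ≤ 1 / (2 * ε) := by positivity
  nlinarith [mul_le_mul_of_nonneg_left hexp hc]

section DiscreteDensity

variable {N : ℕ} {x : ℝ → ℕ → ℝ} {t : ℝ}

theorem discDens_of_mem (hord : ∀ i < N, x t i < x t (i + 1)) {k : ℕ} (hk : k < N) {y : ℝ}
    (hy : y ∈ Set.Ico (x t k) (x t (k + 1))) :
    discDens N x y t = 1 / (N * (x t (k + 1) - x t k)) :=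
  sum_indicator_apply_of_mem (pairwiseDisjoint_Ico_of_lt_succ hord) (mem_range.2 hk) hy

theorem discDens_of_forall_notMem {y : ℝ} (hy : ∀ k < N, y ∉ Set.Ico (x t k) (x t (k + 1))) :
    discDens N x y t = 0 :=
  sum_eq_zero fun k hk => Set.indicator_of_notMem (hy k (mem_range.1 hk)) _

theorem eLpNorm_discDens (hord : ∀ i < N, x t i < x t (i + 1)) {p : ℝ} (hp : 0 < p) :
    eLpNorm (fun y => discDens N x y t) (ENNReal.ofReal p) volume =
      ENNReal.ofReal ((N : ℝ) ^ (-p) * ∑ k ∈ range N, (x t (k + 1) - x t k) ^ (1 - p))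
        ^ (1 / p) := by
  have hN : ∀ k ∈ range N, (0 : ℝ) < N := fun k hk =>
    Nat.cast_pos.2 (Nat.zero_lt_of_lt (mem_range.1 hk))
  have hd : ∀ k ∈ range N, 0 < x t (k + 1) - x t k := fun k hk =>
    sub_pos.2 (hord k (mem_range.1 hk))
  have hpow : ∀ y, ‖discDens N x y t‖ₑ ^ p = ∑ k ∈ range N,
      (Set.Ico (x t k) (x t (k + 1))).indicator
        (fun _ => ‖1 / ((N : ℝ) * (x t (k + 1) - x t k))‖ₑ ^ p) y :=
    apply_sum_indicator_const (pairwiseDisjoint_Ico_of_lt_succ hord) _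
      (F := fun r : ℝ => ‖r‖ₑ ^ p) (by simp [ENNReal.zero_rpow_of_pos hp])
  rw [eLpNorm_eq_lintegral_rpow_enorm_toReal (by simpa using hp) ENNReal.ofReal_ne_top,
    ENNReal.toReal_ofReal hp.le]
  congr 1
  simp_rw [hpow]
  rw [lintegral_finsetSum _ fun k _ => measurable_const.indicator measurableSet_Ico, mul_sum,
    ENNReal.ofReal_sum_of_nonneg fun k hk => by have := hN k hk; have := hd k hk; positivity]
  refine sum_congr rfl fun k hk => ?_
  have hN := hN k hk
  have hd := hd k hk
  rw [lintegral_indicator_const measurableSet_Ico, Real.volume_Ico,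
    Real.enorm_eq_ofReal (by positivity), ENNReal.ofReal_rpow_of_nonneg (by positivity) hp.le,
    ← ENNReal.ofReal_mul (by positivity)]
  congr 1
  rw [one_div, Real.inv_rpow (by positivity), Real.mul_rpow hN.le hd.le, Real.rpow_neg hN.le,
    Real.rpow_sub hd, Real.rpow_one]
  field_simp

theorem ofReal_le_eLpNorm_top_discDens (hord : ∀ i < N, x t i < x t (i + 1)) {k : ℕ}
    (hk : k < N) :
    ENNReal.ofReal (1 / (N * (x t (k + 1) - x t k))) ≤
      eLpNorm (fun y => discDens N x y t) ⊤ volume := by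
  have hN : (0 : ℝ) < N := Nat.cast_pos.2 (Nat.zero_lt_of_lt hk)
  have hd : 0 < x t (k + 1) - x t k := sub_pos.2 (hord k hk)
  have hR : 0 ≤ 1 / ((N : ℝ) * (x t (k + 1) - x t k)) := by positivity
  calc ENNReal.ofReal (1 / (N * (x t (k + 1) - x t k)))
      = eLpNorm ((Set.Ico (x t k) (x t (k + 1))).indicator
          fun _ => 1 / ((N : ℝ) * (x t (k + 1) - x t k))) ⊤ volume := by
        rw [eLpNorm_indicator_const' measurableSet_Ico (by simpa using hd) ENNReal.top_ne_zero,
          Real.enorm_eq_ofReal hR]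
        simp
    _ ≤ eLpNorm (fun y => discDens N x y t) ⊤ volume := by
        refine eLpNorm_mono_real fun y => ?_
        rw [Real.norm_of_nonneg (Set.indicator_nonneg (fun _ _ => hR) y)]
        refine single_le_sum (f := fun j => (Set.Ico (x t j) (x t (j + 1))).indicator
          (fun _ => 1 / ((N : ℝ) * (x t (j + 1) - x t j))) y) (fun j hj => ?_) (mem_range.2 hk)
        have := sub_pos.2 (hord j (mem_range.1 hj))
        exact Set.indicator_nonneg (fun _ _ => by positivity) y

end DiscreteDensity

namespace IsParticleSol

variable {ε : ℝ} {N : ℕ} {x : ℝ → ℕ → ℝ}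

theorem hasDerivWithinAt_sum_rpow_gaps (hx : IsParticleSol ε N x) (s : ℝ) {t : ℝ}
    (ht : 0 ≤ t) :
    HasDerivWithinAt (fun t => ∑ k ∈ range N, (x t (k + 1) - x t k) ^ (1 - s))
      ((1 - s) * ∑ k ∈ range N, (x t (k + 1) - x t k) ^ (-s) *
        (particleRHS ε N (x t) (k + 1) - particleRHS ε N (x t) k)) (Set.Ici 0) t := by
  rw [mul_sum]
  refine HasDerivWithinAt.fun_sum fun k hk => ?_
  have hkN := mem_range.1 hk
  have hgap := (hx.2 (k + 1) hkN t ht).fun_sub (hx.2 k hkN.le t ht)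
  have hpos : 0 < x t (k + 1) - x t k := sub_pos.2 (hx.1 t ht k hkN)
  have hpow := (Real.hasDerivAt_rpow_const (p := 1 - s) (Or.inl hpos.ne')).comp_hasDerivWithinAt
    t hgap
  rw [show 1 - s - 1 = -s by ring] at hpow
  rw [← mul_assoc]
  exact hpow

theorem antitoneOn_sum_rpow_gaps (hε : 0 < ε) (hx : IsParticleSol ε N x) {s : ℝ} (hs : 1 ≤ s) :
    AntitoneOn (fun t => ∑ k ∈ range N, (x t (k + 1) - x t k) ^ (1 - s)) (Set.Ici 0) := by
  have hder := fun t (ht : t ∈ Set.Ici (0 : ℝ)) => hx.hasDerivWithinAt_sum_rpow_gaps s ht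
  refine antitoneOn_of_hasDerivWithinAt_nonpos (convex_Ici 0)
    (fun t ht => (hder t ht).continuousWithinAt)
    (fun t ht => (hder t (interior_subset ht)).mono interior_subset) fun t ht => ?_
  have hord := hx.1 t (interior_subset (s := Set.Ici (0 : ℝ)) ht)
  have hmonovary : MonovaryOn (fun k => (x t (k + 1) - x t k) ^ (-s))
      (fun k => 1 / (x t (k + 1) - x t k)) (Finset.range N : Set ℕ) := by
    intro i hi j hj hij
    have hi' := sub_pos.2 (hord i (mem_range.1 hi))
    have hj' := sub_pos.2 (hord j (mem_range.1 hj))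
    exact Real.rpow_le_rpow_of_nonpos hj' ((one_div_lt_one_div hi' hj').1 hij).le (by linarith)
  refine mul_nonpos_of_nonpos_of_nonneg (by linarith) ?_
  rw [particleRHS_eq_interactionVelocity]
  exact sum_mul_interactionVelocity_sub_nonneg (morse_even ε) (monotoneOn_morse hε)
    (convexOn_morse hε) hord (fun k hk => Real.rpow_nonneg (sub_pos.2 (hord k hk)).le _)
    hmonovary

theorem exists_gap_le (hε : 0 < ε) (hx : IsParticleSol ε N x) {t : ℝ} (ht : 0 ≤ t) {k : ℕ}
    (hk : k < N) : ∃ j < N, x 0 (j + 1) - x 0 j ≤ x t (k + 1) - x t k := by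
  have hgap : ∀ τ, 0 ≤ τ → ∀ j ∈ range N, 0 < x τ (j + 1) - x τ j :=
    fun τ hτ j hj => sub_pos.2 (hx.1 τ hτ j (mem_range.1 hj))
  have hpow : ∀ τ, 0 ≤ τ → ∀ n : ℕ, ∑ j ∈ range N, (1 / (x τ (j + 1) - x τ j)) ^ n =
      ∑ j ∈ range N, (x τ (j + 1) - x τ j) ^ (1 - ((n : ℝ) + 1)) := fun τ hτ n =>
    sum_congr rfl fun j hj => by
      rw [show 1 - ((n : ℝ) + 1) = -n by ring, Real.rpow_neg (hgap τ hτ j hj).le,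
        Real.rpow_natCast, one_div, inv_pow]
  obtain ⟨j, hj, hle⟩ := exists_le_of_forall_sum_pow_le
    (fun j hj => (one_div_pos.2 (hgap t ht j hj)).le)
    (fun j hj => (one_div_pos.2 (hgap 0 le_rfl j hj)).le)
    (fun n => by
      rw [hpow t ht, hpow 0 le_rfl]
      exact hx.antitoneOn_sum_rpow_gaps hε (le_add_of_nonneg_left n.cast_nonneg)
        Set.self_mem_Ici ht ht)
    (mem_range.2 hk)
  exact ⟨j, mem_range.1 hj,
    (one_div_le_one_div (hgap t ht k (mem_range.2 hk)) (hgap 0 le_rfl j hj)).1 hle⟩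

theorem eLpNorm_top_discDens_le (hε : 0 < ε) (hx : IsParticleSol ε N x) {t : ℝ} (ht : 0 ≤ t) :
    eLpNorm (fun y => discDens N x y t) ⊤ volume ≤
      eLpNorm (fun y => discDens N x y 0) ⊤ volume := by
  rw [eLpNorm_exponent_top]
  refine eLpNormEssSup_le_of_ae_enorm_bound (ae_of_all _ fun y => ?_)
  by_cases hy : ∃ k < N, y ∈ Set.Ico (x t k) (x t (k + 1))
  · obtain ⟨k, hk, hyk⟩ := hy
    obtain ⟨j, hj, hle⟩ := hx.exists_gap_le hε ht hk
    have hN : (0 : ℝ) < N := Nat.cast_pos.2 (Nat.zero_lt_of_lt hk)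
    have hdj : 0 < x 0 (j + 1) - x 0 j := sub_pos.2 (hx.1 0 le_rfl j hj)
    have hdk : 0 < x t (k + 1) - x t k := sub_pos.2 (hx.1 t ht k hk)
    rw [discDens_of_mem (hx.1 t ht) hk hyk, Real.enorm_eq_ofReal (by positivity)]
    refine le_trans (ENNReal.ofReal_le_ofReal ?_)
      (ofReal_le_eLpNorm_top_discDens (hx.1 0 le_rfl) hj)
    gcongr
  · push Not at hy
    simp [discDens_of_forall_notMem hy]

end IsParticleSol

theorem stmt4_general (ε : ℝ) (hε : 0 < ε) (N : ℕ) (x : ℝ → ℕ → ℝ)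
    (hx : IsParticleSol ε N x) :
    (∀ p : ℝ, 1 ≤ p → ∀ t : ℝ, 0 ≤ t →
      eLpNorm (fun y => discDens N x y t) (ENNReal.ofReal p) volume ≤
        max (eLpNorm (fun y => discDens N x y 0) (ENNReal.ofReal p) volume)
          (ENNReal.ofReal ((2 * ε) ^ (-((p - 1) / p))))) ∧
    (∀ t : ℝ, 0 ≤ t →
      eLpNorm (fun y => discDens N x y t) ⊤ volume ≤
        max (eLpNorm (fun y => discDens N x y 0) ⊤ volume)
          (ENNReal.ofReal (1 / (2 * ε)))) := by
  refine ⟨fun p hp t ht => le_max_of_le_left ?_,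
    fun t ht => le_max_of_le_left (hx.eLpNorm_top_discDens_le hε ht)⟩
  have hp₀ : 0 < p := by linarith
  rw [eLpNorm_discDens (hx.1 t ht) hp₀, eLpNorm_discDens (hx.1 0 le_rfl) hp₀]
  gcongr ENNReal.ofReal (_ * ?_) ^ _
  exact hx.antitoneOn_sum_rpow_gaps hε hp Set.self_mem_Ici ht ht

/-- `L^p` estimates for `ρ^N`. For every `p ∈ [1,∞)` and `t ≥ 0`,
`‖ρ^N(·,t)‖_{L^p} ≤ max{‖ρ^N(·,0)‖_{L^p}, (2ε)^{-(p-1)/p}}`, and for `p = ∞`,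
`‖ρ^N(·,t)‖_{L^∞} ≤ max{‖ρ^N(·,0)‖_{L^∞}, 1/(2ε)}`. -/
theorem stmt4 (ε : ℝ) (hε : 0 < ε) (N : ℕ) (hN : 1 ≤ N) (x : ℝ → ℕ → ℝ)
    (hx : IsParticleSol ε N x) :
    (∀ p : ℝ, 1 ≤ p → ∀ t : ℝ, 0 ≤ t →
      eLpNorm (fun y => discDens N x y t) (ENNReal.ofReal p) volume ≤
        max (eLpNorm (fun y => discDens N x y 0) (ENNReal.ofReal p) volume)
          (ENNReal.ofReal ((2 * ε) ^ (-((p - 1) / p))))) ∧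
    (∀ t : ℝ, 0 ≤ t →
      eLpNorm (fun y => discDens N x y t) ⊤ volume ≤
        max (eLpNorm (fun y => discDens N x y 0) ⊤ volume)
          (ENNReal.ofReal (1 / (2 * ε)))) :=
  stmt4_general ε hε N x hx
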